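/- Let G be a connected claw-free graph, and suppose G contains an induced path a−b−c−d where b and c both have degree 2 in G. If G has a perfect matching, then G has a perfect matching-cut. -/

import Mathlib

/-!
A perfect matching `M` of `G` either contains `bc` or, since `b` and `c` have degree two,
contains `ab` and `cd`, and then `{b, c}` is a component of `G - M`. If it contains `bc` and `bc`
is a bridge, `G - M` is disconnected anyway. Otherwise `H = G - bc` is connected; it is still
claw-free because `b` and `c` have no common neighbour, and the matching minus `bc` exposes only
`b` and `c`. Sumner's exchange argument then yields a perfect matching of `H`: along a shortest
path `u x y ⋯ v` between the two exposed vertices, the claw at `x` with leaves `u`, `y` and the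
partner of `x` lets `u` be matched while the exposed vertex moves strictly closer to `v`. That
perfect matching avoids `bc`, so it is a matching-cut.

Matchings are encoded as involutions `f` with `x` adjacent to `f x`, the fixed points being the
exposed vertices.
-/

open Function Equiv SimpleGraph

theorem Function.Involutive.swap_comp {α : Type*} [DecidableEq α] {f : α → α}
    (hf : Involutive f) {u v : α} (h : Equiv.swap (f u) (f v) = Equiv.swap u v) :
    Involutive (Equiv.swap u v ∘ f) := fun x => by
  simp only [comp_apply, hf.injective.map_swap, h, hf x, swap_apply_self]

namespace SimpleGraph

variable {V : Type*}

def IsClawFree (G : SimpleGraph V) : Prop :=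
  ∀ v a b c : V, a ≠ b → a ≠ c → b ≠ c →
    G.Adj v a → G.Adj v b → G.Adj v c → G.Adj a b ∨ G.Adj a c ∨ G.Adj b c

section Basic

variable {G : SimpleGraph V} {a b c u v w x : V}

lemma eq_or_eq_of_adj_of_degree_eq_two [Fintype (G.neighborSet b)] (h : G.degree b = 2)
    (ha : G.Adj b a) (hc : G.Adj b c) (hac : a ≠ c) (hx : G.Adj b x) : x = a ∨ x = c := by
  classical
  have hN : G.neighborFinset b = {a, c} :=
    (Finset.eq_of_subset_of_card_le (by simp [Finset.insert_subset_iff, ha, hc])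
      (by rw [card_neighborFinset_eq_degree, h, Finset.card_pair hac])).symm
  simpa [hN] using (G.mem_neighborFinset b x).2 hx

lemma IsClawFree.deleteEdges_singleton (hG : G.IsClawFree)
    (hbc : ∀ v, G.Adj v b → ¬ G.Adj v c) : (G.deleteEdges {s(b, c)}).IsClawFree := by
  intro v x y z hxy hxz hyz hvx hvy hvz
  rw [deleteEdges_adj] at hvx hvy hvz
  have lift : ∀ {p q}, G.Adj p q → G.Adj v p → G.Adj v q →
      (G.deleteEdges {s(b, c)}).Adj p q := by
    intro p q hpq hvp hvq
    refine (deleteEdges_adj ..).2 ⟨hpq, fun h => ?_⟩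
    rw [Set.mem_singleton_iff, Sym2.eq_iff] at h
    rcases h with ⟨rfl, rfl⟩ | ⟨rfl, rfl⟩
    exacts [hbc v hvp hvq, hbc v hvq hvp]
  rcases hG v x y z hxy hxz hyz hvx.1 hvy.1 hvz.1 with h | h | h
  exacts [.inl (lift h hvx.1 hvy.1), .inr (.inl (lift h hvx.1 hvz.1)),
    .inr (.inr (lift h hvy.1 hvz.1))]

lemma not_reachable_of_forall_adj_mem {s : Set V} (hs : ∀ x y, x ∈ s → G.Adj x y → y ∈ s)
    (hu : u ∈ s) (hv : v ∉ s) : ¬ G.Reachable u v := by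
  rintro ⟨p⟩
  obtain ⟨d, -, hd, hd'⟩ := p.exists_boundary_dart s hu hv
  exact hd' (hs _ _ hd d.adj)

lemma Adj.dist_le_dist_add_one (h : G.Adj u w) (v : V) : G.dist u v ≤ G.dist w v + 1 := by
  have := h.reachable.dist_triangle_left v
  rw [dist_eq_one_iff_adj.2 h] at this
  omega

lemma Connected.exists_adj_dist_eq_add_one (hG : G.Connected) (huv : u ≠ v) :
    ∃ x, G.Adj u x ∧ G.dist u v = G.dist x v + 1 := by
  obtain ⟨p, hp⟩ := hG.exists_walk_length_eq_dist u v
  cases p with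
  | nil => exact absurd rfl huv
  | cons h q =>
    refine ⟨_, h, le_antisymm (h.dist_le_dist_add_one v) ?_⟩
    have := G.dist_le q
    rw [Walk.length_cons] at hp
    omega

end Basic

structure IsNearPerfectInvolution (H : SimpleGraph V) (f : V → V) (u v : V) : Prop where
  involutive : Involutive f
  apply_left : f u = u
  apply_right : f v = v
  ne : u ≠ v
  adj : ∀ x, x ≠ u → x ≠ v → H.Adj x (f x)

namespace IsNearPerfectInvolution

variable {H : SimpleGraph V} {f : V → V} {u v w x : V}

lemma apply_ne_left (hf : H.IsNearPerfectInvolution f u v) (hx : x ≠ u) : f x ≠ u :=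
  fun h => hx (hf.involutive.injective (h.trans hf.apply_left.symm))

lemma apply_ne_right (hf : H.IsNearPerfectInvolution f u v) (hx : x ≠ v) : f x ≠ v :=
  fun h => hx (hf.involutive.injective (h.trans hf.apply_right.symm))

lemma exists_perfect_of_adj (hf : H.IsNearPerfectInvolution f u v) (huv : H.Adj u v) :
    ∃ g : V → V, Involutive g ∧ ∀ x, H.Adj x (g x) := by
  classical
  refine ⟨swap u v ∘ f, hf.involutive.swap_comp (by rw [hf.apply_left, hf.apply_right]),
    fun x => ?_⟩
  by_cases hxu : x = u
  · subst hxu; simpa [hf.apply_left] using huv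
  by_cases hxv : x = v
  · subst hxv; simpa [hf.apply_right] using huv.symm
  simpa [swap_apply_of_ne_of_ne (hf.apply_ne_left hxu) (hf.apply_ne_right hxv)]
    using hf.adj x hxu hxv

lemma exchange [DecidableEq V] (hf : H.IsNearPerfectInvolution f u v) (huw : H.Adj u w)
    (hwv : w ≠ v) :
    H.IsNearPerfectInvolution (swap u (f w) ∘ f ∘ swap u (f w)) (f w) v := by
  have hwu : w ≠ u := huw.ne'
  have hzu : f w ≠ u := hf.apply_ne_left hwu
  have hzv : f w ≠ v := hf.apply_ne_right hwv
  have hzw : f w ≠ w := fun h => (hf.adj w hwu hwv).ne h.symm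
  refine ⟨fun x => by simp [hf.involutive _], by simp [hf.apply_left], ?_, hzv,
    fun x hxz hxv => ?_⟩
  · simp [swap_apply_of_ne_of_ne hf.ne.symm hzv.symm, hf.apply_right]
  by_cases hxu : x = u
  · subst hxu
    simpa [hf.involutive w, swap_apply_of_ne_of_ne hwu hzw.symm] using huw
  by_cases hxw : x = w
  · subst hxw
    simpa [swap_apply_of_ne_of_ne hwu hzw.symm] using huw.symm
  have hfxz : f x ≠ f w := hf.involutive.injective.ne hxw
  simpa [swap_apply_of_ne_of_ne hxu hxz, swap_apply_of_ne_of_ne (hf.apply_ne_left hxu) hfxz]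
    using hf.adj x hxu hxv

lemma exists_adj_dist_apply_lt (hf : H.IsNearPerfectInvolution f u v) (hH : H.IsClawFree)
    (hconn : H.Connected) (hnadj : ¬ H.Adj u v) :
    ∃ w, H.Adj u w ∧ w ≠ v ∧ H.dist (f w) v < H.dist u v := by
  obtain ⟨x, hux, hx⟩ := hconn.exists_adj_dist_eq_add_one hf.ne
  have hxv : x ≠ v := by rintro rfl; exact hnadj hux
  obtain ⟨y, hxy, hy⟩ := hconn.exists_adj_dist_eq_add_one hxv
  have huy : u ≠ y := by rintro rfl; omega
  have hnuy : ¬ H.Adj u y := fun h => by have := h.dist_le_dist_add_one v; omega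
  have hfxu : f x ≠ u := hf.apply_ne_left hux.ne'
  by_cases hfxy : f x = y
  · exact ⟨x, hux, hxv, by rw [hfxy]; omega⟩
  rcases hH x u y (f x) huy hfxu.symm (Ne.symm hfxy) hux.symm hxy (hf.adj x hux.ne' hxv)
    with h | h | h
  · exact absurd h hnuy
  · exact ⟨f x, h, hf.apply_ne_right hxv, by rw [hf.involutive x]; omega⟩
  · exact ⟨x, hux, hxv, by have := h.symm.dist_le_dist_add_one v; omega⟩

theorem exists_perfect (hf : H.IsNearPerfectInvolution f u v) (hH : H.IsClawFree)
    (hconn : H.Connected) : ∃ g : V → V, Involutive g ∧ ∀ x, H.Adj x (g x) := by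
  classical
  induction hn : H.dist u v using Nat.strong_induction_on generalizing u f with
  | _ n ih =>
  by_cases huv : H.Adj u v
  · exact hf.exists_perfect_of_adj huv
  obtain ⟨w, huw, hwv, hlt⟩ := hf.exists_adj_dist_apply_lt hH hconn huv
  exact ih _ (hn ▸ hlt) (hf.exchange huw hwv) rfl

end IsNearPerfectInvolution

namespace Subgraph

variable {G : SimpleGraph V} {M : G.Subgraph} {a b c d : V}

def ofInvolutive (f : V → V) (hf : Involutive f) (hadj : ∀ x, G.Adj x (f x)) : G.Subgraph where
  verts := Set.univ
  Adj x y := f x = y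
  adj_sub := by rintro x _ rfl; exact hadj x
  edge_vert _ := Set.mem_univ _
  symm := ⟨fun x _ h => h ▸ hf x⟩

lemma isPerfectMatching_ofInvolutive (f : V → V) (hf : Involutive f)
    (hadj : ∀ x, G.Adj x (f x)) : (ofInvolutive f hf hadj).IsPerfectMatching :=
  isPerfectMatching_iff.2 fun x => ⟨f x, rfl, fun _ => Eq.symm⟩

lemma IsPerfectMatching.exists_isNearPerfectInvolution_deleteEdges (hM : M.IsPerfectMatching)
    (hbc : M.Adj b c) : ∃ f, (G.deleteEdges {s(b, c)}).IsNearPerfectInvolution f b c := by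
  classical
  choose f hf using isPerfectMatching_iff.1 hM
  have hinv : Involutive f := fun x => ((hf (f x)).2 x (hf x).1.symm).symm
  have hfb : f b = c := ((hf b).2 c hbc).symm
  have hfc : f c = b := by rw [← hfb, hinv]
  refine ⟨swap b c ∘ f, hinv.swap_comp (by rw [hfb, hfc, swap_comm]), by simp [hfb],
    by simp [hfc], hbc.ne, fun x hxb hxc => ?_⟩
  have hfxb : f x ≠ b := fun h => hxc (hinv.injective (h.trans hfc.symm))
  have hfxc : f x ≠ c := fun h => hxb (hinv.injective (h.trans hfb.symm))
  rw [comp_apply, swap_apply_of_ne_of_ne hfxb hfxc, SimpleGraph.deleteEdges_adj]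
  refine ⟨(hf x).1.adj_sub, fun h => ?_⟩
  rw [Set.mem_singleton_iff, Sym2.eq_iff] at h
  rcases h with ⟨rfl, -⟩ | ⟨rfl, -⟩
  exacts [hxb rfl, hxc rfl]

lemma IsPerfectMatching.not_connected_deleteEdges (hM : M.IsPerfectMatching)
    (hNb : ∀ x, G.Adj b x → x = a ∨ x = c) (hNc : ∀ x, G.Adj c x → x = b ∨ x = d)
    (hab : a ≠ b) (hac : a ≠ c) (hbc : ¬ M.Adj b c) :
    ¬ (G.deleteEdges M.edgeSet).Connected := by
  obtain ⟨x, hbx, -⟩ := hM.1 (hM.2 b)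
  have hba : M.Adj b a := by
    rcases hNb x hbx.adj_sub with rfl | rfl
    exacts [hbx, absurd hbx hbc]
  obtain ⟨y, hcy, -⟩ := hM.1 (hM.2 c)
  have hcd : M.Adj c d := by
    rcases hNc y hcy.adj_sub with rfl | rfl
    exacts [absurd hcy.symm hbc, hcy]
  refine fun hconn => not_reachable_of_forall_adj_mem (s := {b, c}) ?_ (by simp)
    (by simp [hab, hac]) (hconn b a)
  rintro x y (rfl | rfl) hxy <;> rw [SimpleGraph.deleteEdges_adj] at hxy
  · rcases hNb y hxy.1 with rfl | rfl
    exacts [absurd (Subgraph.mem_edgeSet.2 hba) hxy.2, by simp]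
  · rcases hNc y hxy.1 with rfl | rfl
    exacts [by simp, absurd (Subgraph.mem_edgeSet.2 hcd) hxy.2]

end Subgraph

end SimpleGraph

theorem clawfree_induced_path_perfectMatchingCut_general {V : Type*} [Fintype V]
    (G : SimpleGraph V) [DecidableRel G.Adj]
    (hclaw : ∀ v a b c : V, a ≠ b → a ≠ c → b ≠ c →
      G.Adj v a → G.Adj v b → G.Adj v c → G.Adj a b ∨ G.Adj a c ∨ G.Adj b c)
    (a b c d : V) (hac : a ≠ c) (hbd : b ≠ d)
    (hab : G.Adj a b) (hbc : G.Adj b c) (hcd : G.Adj c d)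
    (hnac : ¬ G.Adj a c)
    (hdb : G.degree b = 2) (hdc : G.degree c = 2)
    (hpm : ∃ M : G.Subgraph, M.IsPerfectMatching) :
    ∃ M : G.Subgraph, M.IsPerfectMatching ∧ ¬ (G.deleteEdges M.edgeSet).Connected := by
  have hNb : ∀ x, G.Adj b x → x = a ∨ x = c := fun x =>
    eq_or_eq_of_adj_of_degree_eq_two hdb hab.symm hbc hac
  have hNc : ∀ x, G.Adj c x → x = b ∨ x = d := fun x =>
    eq_or_eq_of_adj_of_degree_eq_two hdc hbc.symm hcd hbd
  have isCut : ∀ M : G.Subgraph, M.IsPerfectMatching → ¬ M.Adj b c →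
      ¬ (G.deleteEdges M.edgeSet).Connected := fun M hM =>
    hM.not_connected_deleteEdges hNb hNc hab.ne hac
  obtain ⟨M, hM⟩ := hpm
  by_cases hMbc : M.Adj b c
  case neg => exact ⟨M, hM, isCut M hM hMbc⟩
  set H := G.deleteEdges {s(b, c)}
  by_cases hH : H.Connected
  case neg => exact ⟨M, hM, fun h => hH (h.mono (deleteEdges_anti (by simpa using hMbc)))⟩
  have hHclaw : H.IsClawFree := IsClawFree.deleteEdges_singleton hclaw fun v hvb hvc => by
    rcases hNb v hvb.symm with rfl | rfl
    exacts [hnac hvc, G.loopless.irrefl _ hvc]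
  obtain ⟨f, hf⟩ := hM.exists_isNearPerfectInvolution_deleteEdges hMbc
  obtain ⟨g, hg, hgH⟩ := hf.exists_perfect hHclaw hH
  have hgG : ∀ x, G.Adj x (g x) := fun x => deleteEdges_le _ (hgH x)
  have hN := Subgraph.isPerfectMatching_ofInvolutive g hg hgG
  have hnbc : ¬ H.Adj b c := by simp [H]
  exact ⟨_, hN, isCut _ hN fun h => hnbc ((show g b = c from h) ▸ hgH b)⟩

/-- A connected claw-free graph with an induced path `a-b-c-d` where `b, c` have degree 2,
possessing a perfect matching, has a perfect matching-cut. -/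
theorem clawfree_induced_path_perfectMatchingCut {V : Type*} [Fintype V]
    (G : SimpleGraph V) [DecidableRel G.Adj] (hG : G.Connected)
    (hclaw : ∀ v a b c : V, a ≠ b → a ≠ c → b ≠ c →
      G.Adj v a → G.Adj v b → G.Adj v c → G.Adj a b ∨ G.Adj a c ∨ G.Adj b c)
    (a b c d : V) (hac : a ≠ c) (had : a ≠ d) (hbd : b ≠ d)
    (hab : G.Adj a b) (hbc : G.Adj b c) (hcd : G.Adj c d)
    (hnac : ¬ G.Adj a c) (hnad : ¬ G.Adj a d) (hnbd : ¬ G.Adj b d)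
    (hdb : G.degree b = 2) (hdc : G.degree c = 2)
    (hpm : ∃ M : G.Subgraph, M.IsPerfectMatching) :
    ∃ M : G.Subgraph, M.IsPerfectMatching ∧ ¬ (G.deleteEdges M.edgeSet).Connected :=
  clawfree_induced_path_perfectMatchingCut_general G hclaw a b c d hac hbd hab hbc hcd hnac hdb hdc
    hpm
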